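/- Let σ > 0 and ω, c real with 4ω > c². Set κ = √(4ω−c²), f = (σ+1)κ²/(2√ω), h(x) = cosh(σκx) − c/(2√ω), α_n = ∫_0^∞ h(x)^{−1/σ−n} dx, and let φ = φ_{ω,c} be the solitary profile, θ = θ_{ω,c} the traveling phase, and Φ = φ e^{iθ}. Then the momentum of the soliton satisfies P(Φ) = −(1/2) Im ∫_ℝ \bar{Φ}(y) Φ'(y) dy = −(c/2) f^{1/σ} α₀ + (1/(2σ+2)) f^{(σ+1)/σ} α₁. -/

import Mathlib

/-! For `Φ = φ e^{iθ}` with `φ, θ` real, `conj Φ * Φ' = φ φ' + i φ² θ'`, so the momentum is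
`-(1/2) ∫ φ² θ'`. Since `φ^{2σ} = f / h`, both `φ² = f^{1/σ} h^{-1/σ}` and
`φ² θ' = (c/2) φ² - φ^{2σ+2} / (2σ+2)` are combinations of powers of `h`, and `h` is even,
so each integral over `ℝ` is twice the one over `(0, ∞)`. The real part `φ φ'` only has to be
integrable (for the imaginary part to commute with the integral); this follows from
`|h'| ≤ σκ h / (1 - |c| / (2√ω))`. -/

open Real MeasureTheory

/-- The solitary wave profile `φ_{ω,c}` for the generalized DNLS equation. -/
noncomputable def solProfile (σ ω c : ℝ) (y : ℝ) : ℝ :=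
  ((σ + 1) * (4 * ω - c ^ 2) /
      (2 * Real.sqrt ω *
        (Real.cosh (σ * Real.sqrt (4 * ω - c ^ 2) * y) - c / (2 * Real.sqrt ω)))) ^
    (1 / (2 * σ))

/-- The traveling phase `θ_{ω,c}`. -/
noncomputable def travPhase (σ ω c : ℝ) (y : ℝ) : ℝ :=
  c / 2 * y - (1 / (2 * σ + 2)) * ∫ η in Set.Iio y, solProfile σ ω c η ^ (2 * σ)

/-- The complex soliton profile `Φ = φ e^{iθ}`. -/
noncomputable def solComplex (σ ω c : ℝ) (y : ℝ) : ℂ :=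
  (solProfile σ ω c y : ℂ) * Complex.exp (Complex.I * (travPhase σ ω c y : ℂ))

section PolarForm

variable {φ θ : ℝ → ℝ}

theorem conj_mul_deriv_ofReal_mul_exp {φ' θ' y : ℝ} (hφ : HasDerivAt φ φ' y)
    (hθ : HasDerivAt θ θ' y) :
    starRingEnd ℂ (φ y * Complex.exp (Complex.I * θ y)) *
        deriv (fun y => (φ y : ℂ) * Complex.exp (Complex.I * θ y)) y
      = ((φ y * φ' : ℝ) : ℂ) + ((φ y ^ 2 * θ' : ℝ) : ℂ) * Complex.I := by
  have hΦ : HasDerivAt (fun y => (φ y : ℂ) * Complex.exp (Complex.I * θ y)) _ y :=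
    hφ.ofReal_comp.mul (hθ.ofReal_comp.const_mul Complex.I).cexp
  have hunit : Complex.exp (-Complex.I * θ y) * Complex.exp (Complex.I * θ y) = 1 := by
    rw [← Complex.exp_add, neg_mul, neg_add_cancel, Complex.exp_zero]
  rw [hΦ.deriv, map_mul, Complex.conj_ofReal, ← Complex.exp_conj, map_mul, Complex.conj_I,
    Complex.conj_ofReal]
  push_cast
  linear_combination ((φ y : ℂ) * φ' + (φ y : ℂ) ^ 2 * θ' * Complex.I) * hunit

theorem im_integral_conj_mul_deriv_ofReal_mul_exp {φ' θ' : ℝ → ℝ}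
    (hφ : ∀ y, HasDerivAt φ (φ' y) y) (hθ : ∀ y, HasDerivAt θ (θ' y) y)
    (hre : Integrable fun y => φ y * φ' y) (him : Integrable fun y => φ y ^ 2 * θ' y) :
    (∫ y, starRingEnd ℂ (φ y * Complex.exp (Complex.I * θ y)) *
        deriv (fun y => (φ y : ℂ) * Complex.exp (Complex.I * θ y)) y).im
      = ∫ y, φ y ^ 2 * θ' y := by
  simp only [conj_mul_deriv_ofReal_mul_exp (hφ _) (hθ _)]
  rw [← RCLike.im_eq_complex_im, ← integral_im (hre.ofReal.add (him.ofReal.mul_const _))]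
  simp only [RCLike.im_to_complex, Complex.add_im, Complex.ofReal_im, Complex.mul_I_im,
    Complex.ofReal_re, zero_add]

end PolarForm

section CoshSub

variable {K a : ℝ}

theorem one_sub_abs_mul_cosh_le_cosh_sub (a t : ℝ) : (1 - |a|) * cosh t ≤ cosh t - a := by
  nlinarith [one_le_cosh t, le_abs_self a, abs_nonneg a]

theorem cosh_sub_pos (ha : a < 1) (t : ℝ) : 0 < cosh t - a := by
  linarith [one_le_cosh t]

theorem abs_sinh_le_cosh (t : ℝ) : |sinh t| ≤ cosh t := by
  rw [abs_sinh, ← cosh_abs t]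
  exact (sinh_lt_cosh _).le

theorem exp_abs_le_two_mul_cosh (t : ℝ) : exp |t| ≤ 2 * cosh t := by
  rw [← cosh_abs, cosh_eq]
  linarith [exp_pos (-|t|)]

theorem one_sub_abs_div_two_mul_exp_abs_le_cosh_sub (ha : |a| ≤ 1) (t : ℝ) :
    (1 - |a|) / 2 * exp |t| ≤ cosh t - a := by
  nlinarith [one_sub_abs_mul_cosh_le_cosh_sub a t,
    mul_le_mul_of_nonneg_left (exp_abs_le_two_mul_cosh t) (sub_nonneg.2 ha)]

theorem integrable_cosh_mul_sub_rpow (hK : K ≠ 0) (ha : |a| < 1) {e : ℝ} (he : e < 0) :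
    Integrable fun x => (cosh (K * x) - a) ^ e := by
  obtain ⟨p, hp, rfl⟩ : ∃ p, 0 < p ∧ e = -p := ⟨-e, by linarith, by ring⟩
  have hpos : ∀ x, 0 < cosh (K * x) - a := fun x => cosh_sub_pos ((le_abs_self a).trans_lt ha) _
  have hgap : 0 < (1 - |a|) / 2 := by linarith
  have hdecay : ∀ x, 0 ≤ x →
      (cosh (K * x) - a) ^ (-p) ≤ ((1 - |a|) / 2) ^ (-p) * exp (-(p * |K|) * x) := by
    intro x hx
    calc (cosh (K * x) - a) ^ (-p) ≤ ((1 - |a|) / 2 * exp |K * x|) ^ (-p) :=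
          rpow_le_rpow_of_nonpos (by positivity)
            (one_sub_abs_div_two_mul_exp_abs_le_cosh_sub ha.le _) (by linarith)
      _ = ((1 - |a|) / 2) ^ (-p) * exp (-(p * |K|) * x) := by
          rw [mul_rpow hgap.le (exp_pos _).le, ← exp_mul, abs_mul, abs_of_nonneg hx]
          ring_nf
  refine LocallyIntegrable.integrable_of_isBigO_atTop_of_norm_isNegInvariant
    (g := fun x => exp (-(p * |K|) * x)) ?_ ?_ ?_ ?_
  · exact (Continuous.rpow_const (by fun_prop) fun x => Or.inl (hpos x).ne').locallyIntegrable
  · filter_upwards with x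
    simp [mul_neg, cosh_neg]
  · refine Asymptotics.IsBigO.of_bound (((1 - |a|) / 2) ^ (-p)) ?_
    filter_upwards [Filter.eventually_ge_atTop 0] with x hx
    rw [norm_of_nonneg (rpow_pos_of_pos (hpos x) _).le, norm_of_nonneg (exp_pos _).le]
    exact hdecay x hx
  · exact ⟨Set.Ioi 0, Filter.Ioi_mem_atTop 0,
      exp_neg_integrableOn_Ioi 0 (mul_pos hp (abs_pos.2 hK))⟩

theorem integrable_cosh_mul_sub_rpow_sub_one_mul_sinh (hK : K ≠ 0) (ha : |a| < 1) {e : ℝ}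
    (he : e < 0) : Integrable fun x => (cosh (K * x) - a) ^ (e - 1) * sinh (K * x) := by
  have hpos : ∀ x, 0 < cosh (K * x) - a := fun x => cosh_sub_pos ((le_abs_self a).trans_lt ha) _
  have hgap : 0 < 1 - |a| := by linarith
  refine ((integrable_cosh_mul_sub_rpow hK ha he).div_const (1 - |a|)).mono'
    (Continuous.aestronglyMeasurable ?_) (ae_of_all _ fun x => ?_)
  · exact (Continuous.rpow_const (by fun_prop) fun x => Or.inl (hpos x).ne').mul (by fun_prop)
  · have hsinh : |sinh (K * x)| ≤ (cosh (K * x) - a) / (1 - |a|) := by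
      rw [le_div_iff₀ hgap]
      nlinarith [abs_sinh_le_cosh (K * x), one_sub_abs_mul_cosh_le_cosh_sub a (K * x)]
    rw [norm_mul, norm_of_nonneg (rpow_pos_of_pos (hpos x) _).le, rpow_sub_one (hpos x).ne',
      Real.norm_eq_abs]
    calc (cosh (K * x) - a) ^ e / (cosh (K * x) - a) * |sinh (K * x)|
        ≤ (cosh (K * x) - a) ^ e / (cosh (K * x) - a) * ((cosh (K * x) - a) / (1 - |a|)) :=
          mul_le_mul_of_nonneg_left hsinh (div_nonneg (rpow_pos_of_pos (hpos x) _).le (hpos x).le)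
      _ = (cosh (K * x) - a) ^ e / (1 - |a|) := by field_simp [(hpos x).ne']

theorem integral_cosh_mul_sub_rpow_eq_two_mul_integral_Ioi (K a e : ℝ) :
    ∫ x, (cosh (K * x) - a) ^ e = 2 * ∫ x in Set.Ioi 0, (cosh (K * x) - a) ^ e := by
  rw [← integral_comp_abs]
  congr 1 with x
  rw [← cosh_abs (K * |x|), abs_mul, abs_abs, ← abs_mul, cosh_abs]

end CoshSub

theorem hasDerivAt_integral_Iio {E : Type*} [NormedAddCommGroup E] [NormedSpace ℝ E]
    [CompleteSpace E] {G : ℝ → E} {y : ℝ} (hG : Integrable G) (hy : ContinuousAt G y) :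
    HasDerivAt (fun u => ∫ η in Set.Iio u, G η) (G y) y := by
  have hsplit : (fun u => ∫ η in Set.Iio u, G η)
      = fun u => (∫ η in Set.Iic 0, G η) + ∫ η in (0 : ℝ)..u, G η := by
    funext u
    rw [← integral_Iic_eq_integral_Iio, ← intervalIntegral.integral_Iic_sub_Iic hG.integrableOn
      hG.integrableOn, add_sub_cancel]
  rw [hsplit]
  exact (intervalIntegral.integral_hasDerivAt_right hG.intervalIntegrable
    hG.aestronglyMeasurable.stronglyMeasurableAtFilter hy).const_add _

/-- The constants `f` and `h(y)` of the informal statement, so that `φ ^ (2σ) = f / h`. -/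
noncomputable def solAmp (σ ω c : ℝ) : ℝ :=
  (σ + 1) * √(4 * ω - c ^ 2) ^ 2 / (2 * √ω)

noncomputable def solDenom (σ ω c y : ℝ) : ℝ :=
  cosh (σ * √(4 * ω - c ^ 2) * y) - c / (2 * √ω)

section Soliton

variable {σ ω c : ℝ}

theorem pos_of_sq_lt_four_mul (h : c ^ 2 < 4 * ω) : 0 < ω := by
  nlinarith [sq_nonneg c]

theorem sqrt_four_mul_sub_sq_pos (h : c ^ 2 < 4 * ω) : 0 < √(4 * ω - c ^ 2) :=
  sqrt_pos.2 (by linarith)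

theorem abs_div_two_sqrt_lt_one (h : c ^ 2 < 4 * ω) : |c / (2 * √ω)| < 1 := by
  have hω := pos_of_sq_lt_four_mul h
  have hs : 0 < 2 * √ω := by positivity
  rw [abs_div, abs_of_pos hs, div_lt_one hs]
  exact abs_lt_of_sq_lt_sq (by rw [mul_pow, sq_sqrt hω.le]; linarith) hs.le

theorem solAmp_pos (hσ : 0 < σ) (h : c ^ 2 < 4 * ω) : 0 < solAmp σ ω c := by
  have hω := pos_of_sq_lt_four_mul h
  have hκ := sqrt_four_mul_sub_sq_pos h
  unfold solAmp
  positivity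

theorem solDenom_pos (h : c ^ 2 < 4 * ω) (y : ℝ) : 0 < solDenom σ ω c y :=
  cosh_sub_pos ((le_abs_self _).trans_lt (abs_div_two_sqrt_lt_one h)) _

theorem hasDerivAt_solDenom (y : ℝ) :
    HasDerivAt (solDenom σ ω c)
      (σ * √(4 * ω - c ^ 2) * sinh (σ * √(4 * ω - c ^ 2) * y)) y := by
  have hlin : HasDerivAt (fun y => σ * √(4 * ω - c ^ 2) * y) (σ * √(4 * ω - c ^ 2)) y := by
    simpa using (hasDerivAt_id y).const_mul (σ * √(4 * ω - c ^ 2))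
  exact (hlin.cosh.sub_const _).congr_deriv (mul_comm _ _)

theorem solProfile_rpow (hσ : 0 < σ) (h : c ^ 2 < 4 * ω) (p y : ℝ) :
    solProfile σ ω c y ^ p
      = solAmp σ ω c ^ (p / (2 * σ)) * solDenom σ ω c y ^ (-(p / (2 * σ))) := by
  have hf := solAmp_pos hσ h
  have hh := solDenom_pos (σ := σ) h y
  have hprofile :
      solProfile σ ω c y = (solAmp σ ω c / solDenom σ ω c y) ^ (1 / (2 * σ)) := by
    rw [solProfile, solAmp, solDenom, sq_sqrt (by linarith [sq_nonneg c]), div_div]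
  rw [hprofile, ← rpow_mul (div_pos hf hh).le, div_rpow hf.le hh.le, div_eq_mul_inv,
    ← rpow_neg hh.le, one_div_mul_eq_div]

theorem solProfile_sq (hσ : 0 < σ) (h : c ^ 2 < 4 * ω) (y : ℝ) :
    solProfile σ ω c y ^ 2 = solAmp σ ω c ^ (1 / σ) * solDenom σ ω c y ^ (-(1 / σ)) := by
  rw [← rpow_two, solProfile_rpow hσ h, div_mul_cancel_left₀ two_ne_zero, one_div]

theorem solProfile_rpow_two_mul (hσ : 0 < σ) (h : c ^ 2 < 4 * ω) (y : ℝ) :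
    solProfile σ ω c y ^ (2 * σ) = solAmp σ ω c * solDenom σ ω c y ^ (-1 : ℝ) := by
  rw [solProfile_rpow hσ h, div_self (by positivity), rpow_one]

theorem hasDerivAt_solProfile (hσ : 0 < σ) (h : c ^ 2 < 4 * ω) (y : ℝ) :
    HasDerivAt (solProfile σ ω c)
      (-(√(4 * ω - c ^ 2) / 2) * solProfile σ ω c y * sinh (σ * √(4 * ω - c ^ 2) * y)
        / solDenom σ ω c y) y := by
  have hh := solDenom_pos (σ := σ) h y
  have hform : solProfile σ ω c
      = fun y => solAmp σ ω c ^ (1 / (2 * σ)) * solDenom σ ω c y ^ (-(1 / (2 * σ))) := by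
    funext y; simpa using solProfile_rpow hσ h 1 y
  rw [hform]
  refine (((hasDerivAt_solDenom y).rpow_const (Or.inl hh.ne')).const_mul _).congr_deriv ?_
  rw [rpow_sub_one hh.ne']
  field_simp

theorem solProfile_mul_deriv (hσ : 0 < σ) (h : c ^ 2 < 4 * ω) (y : ℝ) :
    solProfile σ ω c y * (-(√(4 * ω - c ^ 2) / 2) * solProfile σ ω c y
        * sinh (σ * √(4 * ω - c ^ 2) * y) / solDenom σ ω c y)
      = -(√(4 * ω - c ^ 2) / 2) * solAmp σ ω c ^ (1 / σ)
        * (solDenom σ ω c y ^ (-(1 / σ) - 1) * sinh (σ * √(4 * ω - c ^ 2) * y)) := by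
  rw [rpow_sub_one (solDenom_pos h y).ne']
  linear_combination (-(√(4 * ω - c ^ 2) / 2) * sinh (σ * √(4 * ω - c ^ 2) * y)
    / solDenom σ ω c y) * solProfile_sq hσ h y

theorem integrable_solDenom_rpow (hσ : 0 < σ) (h : c ^ 2 < 4 * ω) {e : ℝ} (he : e < 0) :
    Integrable fun y => solDenom σ ω c y ^ e :=
  integrable_cosh_mul_sub_rpow (mul_pos hσ (sqrt_four_mul_sub_sq_pos h)).ne'
    (abs_div_two_sqrt_lt_one h) he

theorem integrable_solDenom_rpow_sub_one_mul_sinh (hσ : 0 < σ) (h : c ^ 2 < 4 * ω) {e : ℝ}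
    (he : e < 0) :
    Integrable fun y => solDenom σ ω c y ^ (e - 1) * sinh (σ * √(4 * ω - c ^ 2) * y) :=
  integrable_cosh_mul_sub_rpow_sub_one_mul_sinh (mul_pos hσ (sqrt_four_mul_sub_sq_pos h)).ne'
    (abs_div_two_sqrt_lt_one h) he

theorem integral_solDenom_rpow_eq_two_mul_integral_Ioi (e : ℝ) :
    ∫ y, solDenom σ ω c y ^ e
      = 2 * ∫ x in Set.Ioi 0, (cosh (σ * √(4 * ω - c ^ 2) * x) - c / (2 * √ω)) ^ e :=
  integral_cosh_mul_sub_rpow_eq_two_mul_integral_Ioi _ _ _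

theorem hasDerivAt_travPhase (hσ : 0 < σ) (h : c ^ 2 < 4 * ω) (y : ℝ) :
    HasDerivAt (travPhase σ ω c)
      (c / 2 - 1 / (2 * σ + 2) * solProfile σ ω c y ^ (2 * σ)) y := by
  have hform : (fun η => solProfile σ ω c η ^ (2 * σ))
      = fun η => solAmp σ ω c * solDenom σ ω c η ^ (-1 : ℝ) :=
    funext (solProfile_rpow_two_mul hσ h)
  have hint : Integrable fun η => solProfile σ ω c η ^ (2 * σ) := by
    rw [hform]
    exact (integrable_solDenom_rpow hσ h (by norm_num)).const_mul _
  have hcont : Continuous fun η => solProfile σ ω c η ^ (2 * σ) := by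
    rw [hform]
    refine continuous_const.mul (Continuous.rpow_const ?_ fun η => Or.inl (solDenom_pos h η).ne')
    exact continuous_iff_continuousAt.2 fun η => (hasDerivAt_solDenom η).continuousAt
  exact (((hasDerivAt_id' y).const_mul (c / 2)).sub
    ((hasDerivAt_integral_Iio hint hcont.continuousAt).const_mul _)).congr_deriv (by ring)

theorem solProfile_sq_mul_deriv_travPhase (hσ : 0 < σ) (h : c ^ 2 < 4 * ω) (y : ℝ) :
    solProfile σ ω c y ^ 2 * (c / 2 - 1 / (2 * σ + 2) * solProfile σ ω c y ^ (2 * σ))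
      = c / 2 * solAmp σ ω c ^ (1 / σ) * solDenom σ ω c y ^ (-(1 / σ))
        - 1 / (2 * σ + 2) * solAmp σ ω c ^ ((σ + 1) / σ)
          * solDenom σ ω c y ^ (-(1 / σ) - 1) := by
  have hexp : (σ + 1) / σ = 1 / σ + 1 := by field_simp; ring
  rw [solProfile_sq hσ h, solProfile_rpow_two_mul hσ h, hexp,
    rpow_add_one (solAmp_pos hσ h).ne', sub_eq_add_neg (-(1 / σ)),
    rpow_add (solDenom_pos h y)]
  ring

end Soliton

theorem soliton_momentum (σ ω c : ℝ) (hσ : 0 < σ) (h : c ^ 2 < 4 * ω) :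
    -(1 / 2) *
        (∫ y : ℝ, (starRingEnd ℂ) (solComplex σ ω c y) * deriv (solComplex σ ω c) y).im
      = -(c / 2) * ((σ + 1) * (Real.sqrt (4 * ω - c ^ 2)) ^ 2 / (2 * Real.sqrt ω)) ^ (1 / σ) *
          (∫ x in Set.Ioi (0 : ℝ),
            (Real.cosh (σ * Real.sqrt (4 * ω - c ^ 2) * x) - c / (2 * Real.sqrt ω)) ^ (-(1 / σ)))
        + (1 / (2 * σ + 2)) *
            ((σ + 1) * (Real.sqrt (4 * ω - c ^ 2)) ^ 2 / (2 * Real.sqrt ω)) ^ ((σ + 1) / σ) *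
          (∫ x in Set.Ioi (0 : ℝ),
            (Real.cosh (σ * Real.sqrt (4 * ω - c ^ 2) * x) - c / (2 * Real.sqrt ω)) ^
              (-(1 / σ) - 1)) := by
  have he : -(1 / σ) < 0 := neg_neg_of_pos (one_div_pos.2 hσ)
  have hα₀ := integrable_solDenom_rpow hσ h he
  have hα₁ := integrable_solDenom_rpow hσ h (e := -(1 / σ) - 1) (by linarith)
  have hre_eq := funext (solProfile_mul_deriv hσ h)
  have him_eq := funext (solProfile_sq_mul_deriv_travPhase hσ h)
  unfold solComplex
  rw [im_integral_conj_mul_deriv_ofReal_mul_exp (hasDerivAt_solProfile hσ h)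
      (hasDerivAt_travPhase hσ h)
      (by rw [hre_eq]; exact (integrable_solDenom_rpow_sub_one_mul_sinh hσ h he).const_mul _)
      (by rw [him_eq]; exact (hα₀.const_mul _).sub (hα₁.const_mul _)),
    him_eq, integral_sub (hα₀.const_mul _) (hα₁.const_mul _), integral_const_mul, integral_const_mul,
    integral_solDenom_rpow_eq_two_mul_integral_Ioi, integral_solDenom_rpow_eq_two_mul_integral_Ioi,
    solAmp]
  ring
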